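/- Let n ≥ 2, let K be a symmetric convex body in ℝⁿ, let u ∈ ℝⁿ be nonzero and let v ∈ ℝⁿ be a unit vector. Then |⟨u, v⟩| · vol_n(K) ≤ 2 · h_K(u) · vol_{n−1}(K | v^⊥). -/

import Mathlib

open MeasureTheory Set
open scoped Pointwise ENNReal RealInnerProductSpace

noncomputable section

abbrev Euc (n : ℕ) := EuclideanSpace ℝ (Fin n)

def IsSymmConvexBody {n : ℕ} (K : Set (Euc n)) : Prop :=
  IsCompact K ∧ Convex ℝ K ∧ (interior K).Nonempty ∧ K = -K

def IsConvexBody {n : ℕ} (K : Set (Euc n)) : Prop :=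
  IsCompact K ∧ Convex ℝ K ∧ (interior K).Nonempty

def suppFn {n : ℕ} (K : Set (Euc n)) (u : Euc n) : ℝ :=
  sSup ((fun y => ⟪u, y⟫) '' K)

def hyperplane {n : ℕ} (u : Euc n) : Set (Euc n) := {x | ⟪x, u⟫ = 0}

def projSet {n : ℕ} (H : Submodule ℝ (Euc n)) (K : Set (Euc n)) : Set (Euc n) :=
  (fun x => (H.orthogonalProjectionOnto x : Euc n)) '' K

def IsNormalSel {n : ℕ} (K : Set (Euc n)) (ν : Euc n → Euc n) : Prop :=
  Measurable ν ∧
    ∀ᵐ x ∂(μH[(n : ℝ) - 1]).restrict (frontier K),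
      ‖ν x‖ = 1 ∧ ∀ y ∈ K, ⟪y - x, ν x⟫ ≤ 0

def IsSeminorm {n : ℕ} (N : Euc n → ℝ) : Prop :=
  (∀ x, 0 ≤ N x) ∧ (∀ x y, N (x + y) ≤ N x + N y) ∧
    ∀ (c : ℝ) (x : Euc n), N (c • x) = |c| * N x

def IsPoincareConst {n : ℕ} (K : Set (Euc n)) (Cp : ℝ) : Prop :=
  ∀ g : Euc n → ℝ, ContDiff ℝ 1 g →
    (∫ x in K, (g x) ^ 2) - (1 / (volume K).toReal) * (∫ x in K, g x) ^ 2 ≤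
      Cp ^ 2 * ∫ x in K, ‖gradient g x‖ ^ 2

def D2 {n : ℕ} (K M : Set (Euc n)) : ℝ :=
  iteratedDerivWithin 2 (fun t : ℝ => (volume (K + t • M)).toReal) (Set.Ici 0) 0

open Module

lemma volume_le_hausdorff {F : Type*} [NormedAddCommGroup F] [InnerProductSpace ℝ F]
    [FiniteDimensional ℝ F] [MeasurableSpace F] [BorelSpace F]
    (hm : 0 < finrank ℝ F) :
    (volume : Measure F) ≤ μH[(finrank ℝ F : ℝ)] := by
  refine MeasureTheory.Measure.le_hausdorffMeasure _ _ ∞ (by simp) (fun s _ => ?_)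
  rcases s.eq_empty_or_nonempty with rfl | ⟨a, ha⟩
  · simp
  by_cases hD : Metric.ediam s = ∞
  · rw [hD, ENNReal.top_rpow_of_pos (by exact_mod_cast hm)]
    exact le_top
  have hbs : Bornology.IsBounded s := by
    rw [Metric.isBounded_iff_ediam_ne_top]; exact hD
  set m := finrank ℝ F with hm'
  set d := Metric.diam s with hd
  have hd0 : (0:ℝ) ≤ d := Metric.diam_nonneg
  set b := stdOrthonormalBasis ℝ F with hb
  set ψ : F ≃ᵐ (Fin m → ℝ) :=
    b.measurableEquiv.trans (MeasurableEquiv.toLp 2 (Fin m → ℝ)).symm with hψdef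
  have hψ : MeasurePreserving ψ volume volume :=
    (EuclideanSpace.volume_preserving_symm_measurableEquiv_toLp (Fin m)).comp
      b.measurePreserving_measurableEquiv
  have hψa : ∀ (y : F) (i : Fin m), ψ y i = b.repr y i := fun y i => rfl
  have key : ∀ y ∈ s, ∀ y' ∈ s, ∀ i : Fin m, b.repr y i - b.repr y' i ≤ d := by
    intro y hy y' hy' i
    have h1 : ⟪b i, y - y'⟫ = b.repr y i - b.repr y' i := by
      rw [← b.repr_apply_apply, map_sub]
      rfl
    calc b.repr y i - b.repr y' i ≤ |⟪b i, y - y'⟫| := by rw [h1]; exact le_abs_self _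
      _ ≤ ‖b i‖ * ‖y - y'‖ := abs_real_inner_le_norm _ _
      _ = dist y y' := by rw [b.orthonormal.1 i, one_mul, dist_eq_norm]
      _ ≤ d := Metric.dist_le_diam_of_mem hbs hy hy'
  set c : Fin m → ℝ := fun i => sInf ((fun y => b.repr y i) '' s) with hc
  have hbdd : ∀ i, BddBelow ((fun y => b.repr y i) '' s) := by
    intro i
    refine ⟨b.repr a i - d, ?_⟩
    rintro _ ⟨y, hy, rfl⟩
    have := key a ha y hy i
    linarith
  set T : Set (Fin m → ℝ) := Set.pi Set.univ (fun i => Set.Icc (c i) (c i + d)) with hT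
  have hsub : s ⊆ ψ ⁻¹' T := by
    intro y hy
    rw [Set.mem_preimage, hT, Set.mem_univ_pi]
    intro i
    rw [hψa]
    constructor
    · exact csInf_le (hbdd i) ⟨y, hy, rfl⟩
    · have h2 : b.repr y i - d ≤ c i := by
        refine le_csInf ⟨_, ⟨a, ha, rfl⟩⟩ ?_
        rintro _ ⟨y', hy', rfl⟩
        have := key y hy y' hy' i
        linarith
      linarith
  calc volume s ≤ volume (ψ ⁻¹' T) := measure_mono hsub
    _ = volume T := hψ.measure_preimage
        ((MeasurableSet.univ_pi (fun i => measurableSet_Icc)).nullMeasurableSet)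
    _ = ∏ i : Fin m, volume (Set.Icc (c i) (c i + d)) := volume_pi_pi _
    _ = ENNReal.ofReal d ^ m := by
        simp [Real.volume_Icc]
    _ = Metric.ediam s ^ (m : ℝ) := by
        rw [← ENNReal.rpow_natCast]
        congr 1
        rw [hd, Metric.diam, ENNReal.ofReal_toReal hD]

lemma suppFn_bound {n : ℕ} {K : Set (Euc n)} (hc : IsCompact K) (hs : K = -K)
    {x : Euc n} (hx : x ∈ K) (u : Euc n) : |⟪u, x⟫| ≤ suppFn K u := by
  have hbdd : BddAbove ((fun y => ⟪u, y⟫) '' K) :=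
    (hc.image (Continuous.inner continuous_const continuous_id)).bddAbove
  rw [abs_le]
  constructor
  · have hx' : -x ∈ K := by
      rw [hs, Set.mem_neg, neg_neg]; exact hx
    have : ⟪u, -x⟫ ≤ suppFn K u := le_csSup hbdd ⟨-x, hx', rfl⟩
    rw [inner_neg_right] at this
    linarith
  · exact le_csSup hbdd ⟨x, hx, rfl⟩


set_option maxHeartbeats 1000000 in
theorem statement3 (n : ℕ) (hn : 2 ≤ n) (K : Set (Euc n)) (hK : IsSymmConvexBody K)
    (u v : Euc n) (hu : u ≠ 0) (hv : ‖v‖ = 1) :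
    |⟪u, v⟫| * (volume K).toReal ≤
      2 * suppFn K u * (μH[(n : ℝ) - 1] (projSet (Submodule.span ℝ {v})ᗮ K)).toReal := by
  obtain ⟨hKc, hKconv, hKint, hKsym⟩ := hK
  have hK0 : (0 : Euc n) ∈ K := by
    obtain ⟨x, hx⟩ := hKint
    have hxK : x ∈ K := interior_subset hx
    have hxK' : -x ∈ K := by rw [hKsym, Set.mem_neg, neg_neg]; exact hxK
    have h2 := hKconv hxK hxK' (by norm_num : (0:ℝ) ≤ 1/2) (by norm_num : (0:ℝ) ≤ 1/2)
      (by norm_num)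
    simpa using h2
  have hsupp0 : 0 ≤ suppFn K u := by
    have := suppFn_bound hKc hKsym hK0 u
    simpa using this
  by_cases hzero : ⟪u, v⟫ = 0
  · rw [hzero]
    simp only [abs_zero, zero_mul]
    positivity
  have hv0 : v ≠ 0 := fun h => by simp [h] at hv
  obtain ⟨m, rfl⟩ : ∃ m, n = m + 1 := ⟨n - 1, by omega⟩
  have hm1 : 1 ≤ m := by omega
  haveI : Fact (finrank ℝ (Euc (m+1)) = m + 1) := ⟨finrank_euclideanSpace_fin⟩
  set H : Submodule ℝ (Euc (m+1)) := (Submodule.span ℝ {v})ᗮ with hH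
  have hHrank : finrank ℝ H = m := Submodule.finrank_orthogonal_span_singleton hv0
  set b0 : OrthonormalBasis (Fin m) ℝ H :=
    (stdOrthonormalBasis ℝ H).reindex (finCongr hHrank) with hb0
  -- orthogonality facts
  have hb0v : ∀ j : Fin m, ⟪v, (b0 j : Euc (m+1))⟫ = 0 := by
    intro j
    exact (b0 j).2 v (Submodule.mem_span_singleton_self v)
  set b1 : Fin (m+1) → Euc (m+1) := Fin.cons v (fun j => (b0 j : Euc (m+1))) with hb1
  have hb1on : Orthonormal ℝ b1 := by
    rw [orthonormal_iff_ite]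
    intro i j
    induction i using Fin.cases with
    | zero =>
      induction j using Fin.cases with
      | zero =>
        simp only [hb1, Fin.cons_zero, if_pos rfl]
        rw [real_inner_self_eq_norm_mul_norm, hv]; norm_num
      | succ j =>
        simp only [hb1, Fin.cons_zero, Fin.cons_succ]
        rw [if_neg (Fin.succ_ne_zero j).symm]
        exact hb0v j
    | succ i =>
      induction j using Fin.cases with
      | zero =>
        simp only [hb1, Fin.cons_zero, Fin.cons_succ]
        rw [if_neg (Fin.succ_ne_zero i)]
        rw [real_inner_comm]
        exact hb0v i
      | succ j =>
        simp only [hb1, Fin.cons_succ]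
        have := orthonormal_iff_ite.mp b0.orthonormal i j
        rw [Submodule.coe_inner] at this
        rw [this]
        simp [Fin.succ_inj]
  have hb1span : ⊤ ≤ Submodule.span ℝ (Set.range b1) := by
    rw [hb1on.linearIndependent.span_eq_top_of_card_eq_finrank
      (by simp [finrank_euclideanSpace_fin])]
  set b : OrthonormalBasis (Fin (m+1)) ℝ (Euc (m+1)) := OrthonormalBasis.mk hb1on hb1span
    with hbdef
  have hbc : ∀ i, b i = b1 i := fun i => by rw [hbdef, OrthonormalBasis.coe_mk]
  set ψ : Euc (m+1) ≃ᵐ (ℝ × (Fin m → ℝ)) :=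
    (b.measurableEquiv.trans (MeasurableEquiv.toLp 2 (Fin (m+1) → ℝ)).symm).trans
      (MeasurableEquiv.piFinSuccAbove (fun _ => ℝ) 0) with hψdef
  have hψ : MeasurePreserving ψ volume volume :=
    ((volume_preserving_piFinSuccAbove (fun _ : Fin (m+1) => ℝ) 0).comp
      (EuclideanSpace.volume_preserving_symm_measurableEquiv_toLp (Fin (m+1)))).comp
      b.measurePreserving_measurableEquiv
  have hψa : ∀ x : Euc (m+1),
      ψ x = (⟪v, x⟫, fun j => ⟪(b0 j : Euc (m+1)), x⟫) := by
    intro x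
    have h0 : ∀ i, b.repr x i = ⟪b1 i, x⟫ := fun i => by
      rw [b.repr_apply_apply, hbc]
    have h1 : ψ x = (b.repr x 0, fun j => b.repr x ((0 : Fin (m+1)).succAbove j)) := rfl
    rw [h1]
    ext
    · rw [h0]
      simp [hb1]
    · simp only
      rw [h0]
      simp [hb1, Fin.zero_succAbove]
  -- projection facts
  set P : Euc (m+1) → H := fun x => H.orthogonalProjectionOnto x with hP
  have hPcont : Continuous P := H.orthogonalProjectionOnto.continuous
  set Q : Set ↥H := P '' K with hQ
  have hQc : IsCompact Q := hKc.image hPcont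
  have hproj : ∀ (x : Euc (m+1)) (j : Fin m),
      ⟪(b0 j : Euc (m+1)), x⟫ = ⟪b0 j, P x⟫ := by
    intro x j
    have h1 : x - (P x : Euc (m+1)) ∈ Hᗮ := Submodule.sub_starProjection_mem_orthogonal (K := H) x
    have h2 : ⟪(b0 j : Euc (m+1)), x - (P x : Euc (m+1))⟫ = 0 :=
      Submodule.inner_right_of_mem_orthogonal (b0 j).2 h1
    rw [inner_sub_right] at h2
    rw [Submodule.coe_inner]
    linarith
  -- set constants
  set h := suppFn K u with hh
  set a := |⟪u, v⟫| with ha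
  have ha0 : 0 < a := abs_pos.mpr hzero
  have habs : ∀ x ∈ K, |⟪u, x⟫| ≤ h := fun x hx => suppFn_bound hKc hKsym hx u
  -- image of K is measurable
  have hψcont : Continuous fun x : Euc (m+1) =>
      ((⟪v, x⟫, fun j => ⟪(b0 j : Euc (m+1)), x⟫) : ℝ × (Fin m → ℝ)) := by
    refine Continuous.prodMk (Continuous.inner continuous_const continuous_id) ?_
    exact continuous_pi fun j => Continuous.inner continuous_const continuous_id
  have himgK : MeasurableSet (ψ '' K) := by
    have heq : ψ '' K = (fun x : Euc (m+1) =>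
        ((⟪v, x⟫, fun j => ⟪(b0 j : Euc (m+1)), x⟫) : ℝ × (Fin m → ℝ))) '' K :=
      Set.image_congr fun x _ => hψa x
    rw [heq]
    exact (hKc.image hψcont).measurableSet
  -- Fubini
  have hvol : volume K = ∫⁻ z, volume ((fun t => (t, z)) ⁻¹' (ψ '' K)) := by
    have h2 : ψ ⁻¹' (ψ '' K) = K := ψ.toEquiv.preimage_image K
    have h1 : volume (ψ ⁻¹' (ψ '' K)) = (volume.prod volume) (ψ '' K) := by
      rw [← MeasureTheory.Measure.volume_eq_prod]
      exact hψ.measure_preimage himgK.nullMeasurableSet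
    calc volume K = volume (ψ ⁻¹' (ψ '' K)) := by rw [h2]
      _ = (volume.prod volume) (ψ '' K) := h1
      _ = ∫⁻ z, volume ((fun t => (t, z)) ⁻¹' (ψ '' K)) :=
        MeasureTheory.Measure.prod_apply_symm himgK
  -- coordinates on H
  set Ψ : ↥H ≃ᵐ (Fin m → ℝ) :=
    b0.measurableEquiv.trans (MeasurableEquiv.toLp 2 (Fin m → ℝ)).symm with hΨdef
  have hΨ : MeasurePreserving Ψ volume volume :=
    (EuclideanSpace.volume_preserving_symm_measurableEquiv_toLp (Fin m)).comp
      b0.measurePreserving_measurableEquiv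
  have hΨa : ∀ (y : ↥H) (j : Fin m), Ψ y j = ⟪b0 j, y⟫ := fun y j => by
    have : Ψ y j = b0.repr y j := rfl
    rw [this, b0.repr_apply_apply]
  have hΨcont : Continuous (⇑Ψ) := by
    have : ⇑Ψ = fun y : ↥H => (fun j : Fin m => ⟪b0 j, y⟫) :=
      funext fun y => funext fun j => hΨa y j
    rw [this]
    exact continuous_pi fun j => Continuous.inner continuous_const continuous_id
  set T : Set (Fin m → ℝ) := Ψ '' Q with hT
  have hTc : IsCompact T := hQc.image hΨcont
  -- fiber estimate
  set cE : ℝ≥0∞ := ENNReal.ofReal (2 * h / a) with hcE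
  have hfiber : ∀ z : Fin m → ℝ,
      volume ((fun t => (t, z)) ⁻¹' (ψ '' K)) ≤ T.indicator (fun _ => cE) z := by
    intro z
    by_cases hne : ((fun t : ℝ => (t, z)) ⁻¹' (ψ '' K)).Nonempty
    · obtain ⟨t0, x0, hx0K, hx0⟩ := hne
      rw [hψa] at hx0
      have hzT : z ∈ T := by
        refine ⟨P x0, ⟨x0, hx0K, rfl⟩, ?_⟩
        funext j
        rw [hΨa, ← hproj]
        exact congrFun (congrArg Prod.snd hx0) j
      rw [Set.indicator_of_mem hzT]
      refine le_trans (Real.volume_le_diam _) (EMetric.diam_le ?_)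
      rintro t1 ⟨x1, hx1K, hx1⟩ t2 ⟨x2, hx2K, hx2⟩
      rw [hψa] at hx1 hx2
      have ht1 : ⟪v, x1⟫ = t1 := congrArg Prod.fst hx1
      have ht2 : ⟪v, x2⟫ = t2 := congrArg Prod.fst hx2
      have hz1 : ∀ j, ⟪(b0 j : Euc (m+1)), x1⟫ = z j := fun j =>
        congrFun (congrArg Prod.snd hx1) j
      have hz2 : ∀ j, ⟪(b0 j : Euc (m+1)), x2⟫ = z j := fun j =>
        congrFun (congrArg Prod.snd hx2) j
      -- x1 - x2 = (t1 - t2) • v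
      have hvv : ⟪v, v⟫ = 1 := by
        rw [real_inner_self_eq_norm_mul_norm, hv]; norm_num
      have hxx : x1 - x2 = (t1 - t2) • v := by
        apply b.repr.injective
        apply PiLp.ext
        intro i
        have hL : b.repr (x1 - x2) i = ⟪b1 i, x1⟫ - ⟪b1 i, x2⟫ := by
          rw [map_sub]
          have e1 : b.repr x1 i = ⟪b1 i, x1⟫ := by rw [b.repr_apply_apply, hbc]
          have e2 : b.repr x2 i = ⟪b1 i, x2⟫ := by rw [b.repr_apply_apply, hbc]
          rw [← e1, ← e2]
          rfl
        have hR : b.repr ((t1 - t2) • v) i = (t1 - t2) * ⟪b1 i, v⟫ := by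
          rw [b.repr_apply_apply, hbc, real_inner_smul_right]
        rw [hL, hR]
        induction i using Fin.cases with
        | zero =>
          simp only [hb1, Fin.cons_zero]
          rw [ht1, ht2, hvv]
          ring
        | succ j =>
          simp only [hb1, Fin.cons_succ]
          rw [hz1, hz2, real_inner_comm, hb0v]
          ring
      have hineq : |t1 - t2| * a ≤ 2 * h := by
        have e1 : |⟪u, x1 - x2⟫| = |t1 - t2| * a := by
          rw [hxx, real_inner_smul_right, abs_mul, ha]
        have e2 : |⟪u, x1 - x2⟫| ≤ |⟪u, x1⟫| + |⟪u, x2⟫| := by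
          rw [inner_sub_right]
          exact abs_sub _ _
        have := habs x1 hx1K
        have := habs x2 hx2K
        linarith
      rw [edist_dist, Real.dist_eq]
      apply ENNReal.ofReal_le_ofReal
      rw [le_div_iff₀ ha0]
      exact hineq
    · rw [Set.not_nonempty_iff_eq_empty] at hne
      rw [hne]
      simp
  have hvolK_le : volume K ≤ cE * volume T := by
    rw [hvol]
    calc ∫⁻ z, volume ((fun t => (t, z)) ⁻¹' (ψ '' K))
        ≤ ∫⁻ z, T.indicator (fun _ => cE) z := lintegral_mono hfiber
      _ ≤ cE * volume T := lintegral_indicator_const_le _ _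
  -- relate T to Q
  have hvolT : volume T = volume Q := by
    have h1 : volume (Ψ ⁻¹' (Ψ '' Q)) = volume (Ψ '' Q) :=
      hΨ.measure_preimage hTc.measurableSet.nullMeasurableSet
    have h2 : Ψ ⁻¹' (Ψ '' Q) = Q := Ψ.toEquiv.preimage_image Q
    rw [h2] at h1
    exact h1.symm
  -- relate Q to projSet via Hausdorff measure
  have hprojSet : projSet H K = ((↑) : ↥H → Euc (m+1)) '' Q := by
    rw [hQ, Set.image_image]
    rfl
  have hausEq : μH[(m : ℝ)] (projSet H K) = (μH[(m : ℝ)] : Measure ↥H) Q := by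
    rw [hprojSet]
    exact isometry_subtype_coe.hausdorffMeasure_image (Or.inl (by positivity)) Q
  have hQle : (volume : Measure ↥H) Q ≤ (μH[(m : ℝ)] : Measure ↥H) Q := by
    have h1 := volume_le_hausdorff (F := ↥H) (by rw [hHrank]; omega)
    rw [hHrank] at h1
    exact MeasureTheory.Measure.le_iff'.1 h1 Q
  have hμfin : (μH[(m : ℝ)] : Measure ↥H) Q < ∞ := by
    have hEq : (μH[(m : ℝ)] : Measure ↥H) = (μH[(finrank ℝ ↥H : ℝ)] : Measure ↥H) := by
      rw [hHrank]
    haveI : (μH[(finrank ℝ ↥H : ℝ)] : Measure ↥H).IsAddHaarMeasure :=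
      isAddHaarMeasure_hausdorffMeasure
    rw [hEq]
    exact hQc.measure_lt_top
  -- put everything together
  have hidx : ((m + 1 : ℕ) : ℝ) - 1 = (m : ℝ) := by push_cast; ring
  rw [hidx]
  have hKfin : volume K ≠ ∞ := hKc.measure_lt_top.ne
  have hcEfin : cE ≠ ∞ := ENNReal.ofReal_ne_top
  have hTfin : volume T ≠ ∞ := by
    rw [hvolT]
    exact (lt_of_le_of_lt hQle hμfin).ne
  have step1 : (volume K).toReal ≤ (2 * h / a) * (volume T).toReal := by
    have := ENNReal.toReal_mono (by
      exact ENNReal.mul_ne_top hcEfin hTfin) hvolK_le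
    rw [ENNReal.toReal_mul, hcE, ENNReal.toReal_ofReal (by positivity)] at this
    exact this
  have step2 : (volume T).toReal ≤ (μH[(m : ℝ)] (projSet H K)).toReal := by
    apply ENNReal.toReal_mono
    · rw [hausEq]; exact hμfin.ne
    · rw [hvolT, hausEq]; exact hQle
  calc a * (volume K).toReal ≤ a * ((2 * h / a) * (volume T).toReal) := by
        apply mul_le_mul_of_nonneg_left step1 (le_of_lt ha0)
    _ = 2 * h * (volume T).toReal := by
        field_simp
    _ ≤ 2 * h * (μH[(m : ℝ)] (projSet H K)).toReal := by
        apply mul_le_mul_of_nonneg_left step2 (by positivity)
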